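/- Let p and d be natural numbers, let X ⊂ ℝ^d be compact, let e be an MPLang expression appropriate for input arity d, and let ε > 0 be a real number. Then there exists a ReLU-MPLang expression e' appropriate for input arity d such that ρ_{𝔾_p,X}(e, e') ≤ ε, i.e., |e(G)(χ)(v) − e'(G)(χ)(v)| ≤ ε for every graph G ∈ 𝔾_p, every d-dimensional feature map χ on G with image contained in X, and every node v of G. -/

import Mathlib

open scoped BigOperators

/-- A finite graph: nodes `Fin n`, with a symmetric, irreflexive adjacency relation. -/
structure MPLGraph where
  n : ℕ
  adj : Fin n → Fin n → Bool
  symm : ∀ u v, adj u v = adj v u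
  irrefl : ∀ v, adj v v = false

namespace MPLGraph

/-- The set of neighbors of `v` in `G`. -/
def neighbors (G : MPLGraph) (v : Fin G.n) : Finset (Fin G.n) :=
  Finset.univ.filter fun u => G.adj v u

/-- The degree of a node. -/
def degree (G : MPLGraph) (v : Fin G.n) : ℕ := (G.neighbors v).card

/-- `G` has degree at most `p` (i.e., `G ∈ 𝔾_p`). -/
def DegreeLE (G : MPLGraph) (p : ℕ) : Prop := ∀ v, G.degree v ≤ p

end MPLGraph

/-- The rectified linear unit. -/
noncomputable def ReLU (x : ℝ) : ℝ := max 0 x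

/-- An MPNN layer of type `d → r`: matrices `W₁, W₂ ∈ ℝ^{r×d}`, bias `b ∈ ℝ^r`,
and a continuous activation function `σ`. -/
structure Layer (d r : ℕ) where
  W₁ : Matrix (Fin r) (Fin d) ℝ
  W₂ : Matrix (Fin r) (Fin d) ℝ
  b : Fin r → ℝ
  σ : ℝ → ℝ
  hσ : Continuous σ

namespace Layer

/-- The GFMT defined by a layer:
`L(G)(χ)(v) = σ(W₁ χ(v) + W₂ Σ_{u ∈ N_G(v)} χ(u) + b)`, componentwise. -/
noncomputable def eval {d r : ℕ} (L : Layer d r) (G : MPLGraph)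
    (χ : Fin G.n → Fin d → ℝ) (v : Fin G.n) : Fin r → ℝ :=
  fun i => L.σ (L.W₁.mulVec (χ v) i + L.W₂.mulVec (∑ u ∈ G.neighbors v, χ u) i + L.b i)

end Layer

/-- An MPNN: a nonempty sequence of layers with matching arities. -/
inductive MPNN : ℕ → ℕ → Type where
  | single {d r : ℕ} : Layer d r → MPNN d r
  | cons {d m r : ℕ} : Layer d m → MPNN m r → MPNN d r

namespace MPNN

/-- The GFMT defined by an MPNN: the sequential composition of its layers. -/
noncomputable def eval : {d r : ℕ} → MPNN d r → (G : MPLGraph) →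
    (Fin G.n → Fin d → ℝ) → (Fin G.n → Fin r → ℝ)
  | _, _, .single L, G, χ => L.eval G χ
  | _, _, .cons L N, G, χ => N.eval G (L.eval G χ)

/-- A ReLU-MPNN: every layer uses ReLU, except that the last layer may use the identity. -/
def IsReLU : {d r : ℕ} → MPNN d r → Prop
  | _, _, .single L => L.σ = ReLU ∨ L.σ = id
  | _, _, .cons L N => L.σ = ReLU ∧ N.IsReLU

/-- The set of activation functions used in the layers of an MPNN. -/
def activations : {d r : ℕ} → MPNN d r → Set (ℝ → ℝ)
  | _, _, .single L => {L.σ}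
  | _, _, .cons L N => insert L.σ N.activations

/-- The number of layers of an MPNN. -/
def numLayers : {d r : ℕ} → MPNN d r → ℕ
  | _, _, .single _ => 1
  | _, _, .cons _ N => N.numLayers + 1

end MPNN

/-- MPLang expressions: `e ::= 1 | P_i | a·e | e + e | f(e) | ◇e`
with `f : ℝ → ℝ` continuous. -/
inductive MPLang : Type where
  | one : MPLang
  | proj : ℕ → MPLang
  | scale : ℝ → MPLang → MPLang
  | add : MPLang → MPLang → MPLang
  | app : (f : ℝ → ℝ) → Continuous f → MPLang → MPLang
  | diamond : MPLang → MPLang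

namespace MPLang

/-- `e` is appropriate for input arity `d`: every `P_i` has `1 ≤ i ≤ d`. -/
def Appropriate (d : ℕ) : MPLang → Prop
  | .one => True
  | .proj i => 1 ≤ i ∧ i ≤ d
  | .scale _ e => e.Appropriate d
  | .add e₁ e₂ => e₁.Appropriate d ∧ e₂.Appropriate d
  | .app _ _ e => e.Appropriate d
  | .diamond e => e.Appropriate d

/-- Semantics of MPLang expressions (the `P_i` are 1-based; out-of-range
projections, which cannot occur in expressions appropriate for `d`, yield 0). -/
noncomputable def eval (d : ℕ) : MPLang → (G : MPLGraph) →
    (Fin G.n → Fin d → ℝ) → Fin G.n → ℝ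
  | .one, _, _, _ => 1
  | .proj i, _, χ, v => if h : i - 1 < d then χ v ⟨i - 1, h⟩ else 0
  | .scale a e, G, χ, v => a * e.eval d G χ v
  | .add e₁ e₂, G, χ, v => e₁.eval d G χ v + e₂.eval d G χ v
  | .app f _ e, G, χ, v => f (e.eval d G χ v)
  | .diamond e, G, χ, v => ∑ u ∈ G.neighbors v, e.eval d G χ u

/-- All function applications in the expression apply functions from `F`. -/
def AppsIn (F : Set (ℝ → ℝ)) : MPLang → Prop
  | .one => True
  | .proj _ => True
  | .scale _ e => e.AppsIn F
  | .add e₁ e₂ => e₁.AppsIn F ∧ e₂.AppsIn F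
  | .app f _ e => f ∈ F ∧ e.AppsIn F
  | .diamond e => e.AppsIn F

/-- A ReLU-MPLang expression: all function applications apply ReLU. -/
def IsReLU (e : MPLang) : Prop := e.AppsIn {ReLU}

end MPLang

/-! Structural induction on `e`. Expressions are uniformly bounded over graphs of degree at most
`p` with features in `X`, so in the case `f(e)` only the values of `f` on a compact interval
matter. There `f` is uniformly close to a function built from the identity, constants, sums and
`ReLU`: such functions are closed under `max` and `min` and interpolate any two values, so the
lattice version of Stone–Weierstrass applies; and such a function applied to a ReLU-MPLang
expression is again one. Uniform continuity of `f` absorbs the error from approximating `e`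
itself; the other constructors propagate errors linearly, with factor `|a|` for `a·e` and `p`
for `◇e`. -/

lemma continuous_ReLU : Continuous ReLU := continuous_const.max continuous_id

lemma mul_div_add_one_le {c ε : ℝ} (hc : 0 ≤ c) (hε : 0 ≤ ε) : c * (ε / (c + 1)) ≤ ε := by
  rw [mul_div_left_comm]
  exact mul_le_of_le_one_right hε ((div_le_one (by positivity)).2 (by linarith))

lemma abs_sum_le_mul_of_card_le {ι : Type*} {s : Finset ι} {a : ι → ℝ} {p : ℕ} {M : ℝ}
    (hs : s.card ≤ p) (hM : 0 ≤ M) (ha : ∀ i ∈ s, |a i| ≤ M) : |∑ i ∈ s, a i| ≤ p * M :=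
  calc |∑ i ∈ s, a i| ≤ ∑ i ∈ s, |a i| := Finset.abs_sum_le_sum_abs _ _
    _ ≤ s.card * M := by simpa using Finset.sum_le_card_nsmul _ _ _ ha
    _ ≤ p * M := by gcongr

namespace MPLang

def ReLUComposable (d : ℕ) (g : ℝ → ℝ) : Prop :=
  ∀ e : MPLang, e.Appropriate d → e.IsReLU →
    ∃ e' : MPLang, e'.Appropriate d ∧ e'.IsReLU ∧
      ∀ (G : MPLGraph) (χ : Fin G.n → Fin d → ℝ) (v : Fin G.n), e'.eval d G χ v = g (e.eval d G χ v)

namespace ReLUComposable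

variable {d : ℕ} {g h : ℝ → ℝ}

lemma id : ReLUComposable d fun x => x :=
  fun e ha hr => ⟨e, ha, hr, fun _ _ _ => rfl⟩

lemma const (c : ℝ) : ReLUComposable d fun _ => c :=
  fun _ _ _ => ⟨.scale c .one, trivial, trivial, fun _ _ _ => mul_one c⟩

lemma add (hg : ReLUComposable d g) (hh : ReLUComposable d h) :
    ReLUComposable d fun x => g x + h x := by
  intro e ha hr
  obtain ⟨eg, hag, hrg, hg⟩ := hg e ha hr
  obtain ⟨eh, hah, hrh, hh⟩ := hh e ha hr
  exact ⟨.add eg eh, ⟨hag, hah⟩, ⟨hrg, hrh⟩, fun G χ v => by simp only [eval, hg, hh]⟩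

lemma const_mul (a : ℝ) (hg : ReLUComposable d g) : ReLUComposable d fun x => a * g x := by
  intro e ha hr
  obtain ⟨eg, hag, hrg, hg⟩ := hg e ha hr
  exact ⟨.scale a eg, hag, hrg, fun G χ v => by simp only [eval, hg]⟩

lemma relu (hg : ReLUComposable d g) : ReLUComposable d fun x => ReLU (g x) := by
  intro e ha hr
  obtain ⟨eg, hag, hrg, hg⟩ := hg e ha hr
  exact ⟨.app ReLU continuous_ReLU eg, hag, ⟨rfl, hrg⟩, fun G χ v => by simp only [eval, hg]⟩

lemma max (hg : ReLUComposable d g) (hh : ReLUComposable d h) :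
    ReLUComposable d fun x => max (g x) (h x) := by
  convert hg.add (hh.add (hg.const_mul (-1))).relu using 2 with x
  simp only [ReLU]
  grind

lemma min (hg : ReLUComposable d g) (hh : ReLUComposable d h) :
    ReLUComposable d fun x => min (g x) (h x) := by
  convert hg.add ((hg.add (hh.const_mul (-1))).relu.const_mul (-1)) using 2 with x
  simp only [ReLU]
  grind

lemma affine (a b : ℝ) : ReLUComposable d fun x => a * x + b :=
  (id.const_mul a).add (const b)

/-- Lattice Stone–Weierstrass on `C(K, ℝ)`. -/
theorem exists_abs_sub_lt {K : Set ℝ} (hK : IsCompact K) {f : ℝ → ℝ} (hf : ContinuousOn f K)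
    {ε : ℝ} (hε : 0 < ε) : ∃ g, ReLUComposable d g ∧ ∀ x ∈ K, |f x - g x| < ε := by
  have := isCompact_iff_compactSpace.mp hK
  let L : Set C(K, ℝ) := {φ | ∃ g, ReLUComposable d g ∧ ∀ x, φ x = g x}
  have hL : closure L = ⊤ := by
    refine ContinuousMap.sublattice_closure_eq_top L ⟨0, _, const 0, fun _ => rfl⟩ ?_ ?_ ?_
    · rintro φ ⟨g, hg, hφ⟩ ψ ⟨h, hh, hψ⟩
      exact ⟨_, hg.min hh, fun x => by simp [hφ, hψ]⟩
    · rintro φ ⟨g, hg, hφ⟩ ψ ⟨h, hh, hψ⟩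
      exact ⟨_, hg.max hh, fun x => by simp [hφ, hψ]⟩
    · intro v x y
      obtain ⟨a, b, hx, hy⟩ : ∃ a b : ℝ, a * x + b = v x ∧ a * y + b = v y := by
        by_cases hxy : x = y
        · exact ⟨0, v x, by simp, by simp [hxy]⟩
        · have : (y : ℝ) - x ≠ 0 := sub_ne_zero.2 fun h => hxy (Subtype.ext h.symm)
          refine ⟨(v y - v x) / (y - x), v x - (v y - v x) / (y - x) * x, by ring, ?_⟩
          field_simp
          ring
      exact ⟨⟨fun t => a * t + b, by fun_prop⟩, ⟨_, affine a b, fun _ => rfl⟩, hx, hy⟩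
  have hfL : (⟨K.domRestrict f, hf.domRestrict⟩ : C(K, ℝ)) ∈ closure L := by
    rw [hL]; trivial
  obtain ⟨φ, ⟨g, hg, hφg⟩, hφ⟩ := Metric.mem_closure_iff.mp hfL ε hε
  refine ⟨g, hg, fun x hx => ?_⟩
  rw [← hφg ⟨x, hx⟩, ← Real.dist_eq]
  exact (ContinuousMap.dist_apply_le_dist ⟨x, hx⟩).trans_lt hφ

end ReLUComposable

def UniformlyBounded (p d : ℕ) (X : Set (Fin d → ℝ)) (e : MPLang) (M : ℝ) : Prop :=
  ∀ G : MPLGraph, G.DegreeLE p → ∀ χ : Fin G.n → Fin d → ℝ, (∀ v, χ v ∈ X) →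
    ∀ v, |e.eval d G χ v| ≤ M

/-- `ρ_{𝔾_p,X}(e, e') ≤ ε`. -/
def UniformlyClose (p d : ℕ) (X : Set (Fin d → ℝ)) (e e' : MPLang) (ε : ℝ) : Prop :=
  ∀ G : MPLGraph, G.DegreeLE p → ∀ χ : Fin G.n → Fin d → ℝ, (∀ v, χ v ∈ X) →
    ∀ v, |e.eval d G χ v - e'.eval d G χ v| ≤ ε

variable {p d : ℕ} {X : Set (Fin d → ℝ)}

theorem exists_uniformlyBounded (hX : IsCompact X) {e : MPLang} (he : e.Appropriate d) :
    ∃ M, 0 ≤ M ∧ UniformlyBounded p d X e M := by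
  induction e with
  | one => exact ⟨1, zero_le_one, fun _ _ _ _ _ => by simp [eval]⟩
  | proj i =>
    obtain ⟨R, hR0, hR⟩ := hX.isBounded.exists_pos_norm_le
    refine ⟨R, hR0.le, fun G _ χ hχ v => ?_⟩
    simp only [eval]
    split_ifs
    · exact (norm_le_pi_norm (χ v) _).trans (hR _ (hχ v))
    · simpa using hR0.le
  | scale a e ih =>
    obtain ⟨M, hM0, hM⟩ := ih he
    exact ⟨|a| * M, by positivity, fun G hG χ hχ v => by
      simpa only [eval, abs_mul] using mul_le_mul_of_nonneg_left (hM G hG χ hχ v) (abs_nonneg a)⟩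
  | add e₁ e₂ ih₁ ih₂ =>
    obtain ⟨M₁, hM₁0, hM₁⟩ := ih₁ he.1
    obtain ⟨M₂, hM₂0, hM₂⟩ := ih₂ he.2
    exact ⟨M₁ + M₂, by positivity, fun G hG χ hχ v =>
      (abs_add_le _ _).trans (add_le_add (hM₁ G hG χ hχ v) (hM₂ G hG χ hχ v))⟩
  | app f hf e ih =>
    obtain ⟨M, -, hM⟩ := ih he
    obtain ⟨C, hC⟩ := (isCompact_Icc (a := -M) (b := M)).exists_bound_of_continuousOn
      hf.continuousOn
    exact ⟨|C|, abs_nonneg C, fun G hG χ hχ v =>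
      (hC _ (abs_le.1 (hM G hG χ hχ v))).trans (le_abs_self C)⟩
  | diamond e ih =>
    obtain ⟨M, hM0, hM⟩ := ih he
    exact ⟨p * M, by positivity, fun G hG χ hχ v =>
      abs_sum_le_mul_of_card_le (hG v) hM0 fun u _ => hM G hG χ hχ u⟩

namespace UniformlyClose

variable {e e' e₁ e₁' e₂ e₂' : MPLang} {ε ε₁ ε₂ : ℝ}

lemma refl (e : MPLang) (hε : 0 ≤ ε) : UniformlyClose p d X e e ε :=
  fun _ _ _ _ _ => by simpa using hε

lemma mono (h : UniformlyClose p d X e e' ε₁) (hε : ε₁ ≤ ε₂) : UniformlyClose p d X e e' ε₂ :=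
  fun G hG χ hχ v => (h G hG χ hχ v).trans hε

lemma scale (a : ℝ) (h : UniformlyClose p d X e e' ε) :
    UniformlyClose p d X (.scale a e) (.scale a e') (|a| * ε) := fun G hG χ hχ v => by
  simpa only [eval, ← mul_sub, abs_mul] using
    mul_le_mul_of_nonneg_left (h G hG χ hχ v) (abs_nonneg a)

lemma add (h₁ : UniformlyClose p d X e₁ e₁' ε₁) (h₂ : UniformlyClose p d X e₂ e₂' ε₂) :
    UniformlyClose p d X (.add e₁ e₂) (.add e₁' e₂') (ε₁ + ε₂) := fun G hG χ hχ v => by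
  simp only [eval]
  rw [add_sub_add_comm]
  exact (abs_add_le _ _).trans (add_le_add (h₁ G hG χ hχ v) (h₂ G hG χ hχ v))

lemma diamond (h : UniformlyClose p d X e e' ε) (hε : 0 ≤ ε) :
    UniformlyClose p d X (.diamond e) (.diamond e') (p * ε) := fun G hG χ hχ v => by
  simp only [eval]
  rw [← Finset.sum_sub_distrib]
  exact abs_sum_le_mul_of_card_le (hG v) hε fun u _ => h G hG χ hχ u

end UniformlyClose

theorem exists_isReLU_uniformlyClose_app {f : ℝ → ℝ} (hf : Continuous f) {e : MPLang} {M : ℝ}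
    (hM : UniformlyBounded p d X e M)
    (happrox : ∀ η > 0, ∃ e', e'.Appropriate d ∧ e'.IsReLU ∧ UniformlyClose p d X e e' η)
    {ε : ℝ} (hε : 0 < ε) :
    ∃ e'', e''.Appropriate d ∧ e''.IsReLU ∧ UniformlyClose p d X (.app f hf e) e'' ε := by
  set K := Set.Icc (-(M + 1)) (M + 1)
  obtain ⟨δ, hδ, hfδ⟩ := Metric.uniformContinuousOn_iff_le.mp
    (isCompact_Icc.uniformContinuousOn_of_continuous hf.continuousOn : UniformContinuousOn f K)
    (ε / 2) (half_pos hε)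
  obtain ⟨g, hg, hfg⟩ :=
    ReLUComposable.exists_abs_sub_lt (d := d) isCompact_Icc hf.continuousOn (half_pos hε)
  obtain ⟨e', ha', hr', he'⟩ := happrox (min δ 1) (lt_min hδ one_pos)
  obtain ⟨e'', ha'', hr'', he''⟩ := hg e' ha' hr'
  refine ⟨e'', ha'', hr'', fun G hG χ hχ v => ?_⟩
  set x := e.eval d G χ v
  set x' := e'.eval d G χ v
  have hxx' : |x - x'| ≤ min δ 1 := he' G hG χ hχ v
  have hx := abs_le.1 (hM G hG χ hχ v)
  have hx' := abs_le.1 (hxx'.trans (min_le_right δ 1))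
  have hxK : x ∈ K := ⟨by linarith, by linarith⟩
  have hx'K : x' ∈ K := ⟨by linarith, by linarith⟩
  have hff' : |f x - f x'| ≤ ε / 2 := hfδ x hxK x' hx'K (hxx'.trans (min_le_left δ 1))
  calc |f x - e''.eval d G χ v| = |(f x - f x') + (f x' - g x')| := by rw [he'', sub_add_sub_cancel]
    _ ≤ ε / 2 + ε / 2 := (abs_add_le _ _).trans (add_le_add hff' (hfg x' hx'K).le)
    _ = ε := add_halves ε

end MPLang

/-- Theorem 3 of the paper: over graphs of degree at most `p`
and feature maps with values in a compact set `X`, every MPLang expression can be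
uniformly approximated by a ReLU-MPLang expression. -/
theorem mplang_approx_by_relu_mplang (p d : ℕ) (X : Set (Fin d → ℝ))
    (hX : IsCompact X) (e : MPLang) (he : e.Appropriate d)
    (ε : ℝ) (hε : 0 < ε) :
    ∃ e' : MPLang, e'.Appropriate d ∧ e'.IsReLU ∧
      ∀ (G : MPLGraph), G.DegreeLE p →
        ∀ χ : Fin G.n → Fin d → ℝ, (∀ v, χ v ∈ X) →
          ∀ v : Fin G.n, |e.eval d G χ v - e'.eval d G χ v| ≤ ε := by
  change ∃ e', e'.Appropriate d ∧ e'.IsReLU ∧ MPLang.UniformlyClose p d X e e' ε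
  induction e generalizing ε with
  | one => exact ⟨.one, trivial, trivial, .refl _ hε.le⟩
  | proj i => exact ⟨.proj i, he, trivial, .refl _ hε.le⟩
  | scale a e ih =>
    obtain ⟨e', ha, hr, hc⟩ := ih he (ε / (|a| + 1)) (by positivity)
    exact ⟨.scale a e', ha, hr, (hc.scale a).mono (mul_div_add_one_le (abs_nonneg a) hε.le)⟩
  | add e₁ e₂ ih₁ ih₂ =>
    obtain ⟨e₁', ha₁, hr₁, hc₁⟩ := ih₁ he.1 (ε / 2) (half_pos hε)
    obtain ⟨e₂', ha₂, hr₂, hc₂⟩ := ih₂ he.2 (ε / 2) (half_pos hε)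
    exact ⟨.add e₁' e₂', ⟨ha₁, ha₂⟩, ⟨hr₁, hr₂⟩, add_halves ε ▸ hc₁.add hc₂⟩
  | app f hf e ih =>
    obtain ⟨M, -, hM⟩ := MPLang.exists_uniformlyBounded (p := p) (e := e) hX he
    exact MPLang.exists_isReLU_uniformlyClose_app hf hM (ih he) hε
  | diamond e ih =>
    obtain ⟨e', ha, hr, hc⟩ := ih he (ε / (p + 1)) (by positivity)
    exact ⟨.diamond e', ha, hr, (hc.diamond (by positivity)).mono
      (mul_div_add_one_le p.cast_nonneg hε.le)⟩
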